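/- Variable abstraction of alien-congruent terms: let C(y₁,…,y_ℓ) and D(z₁,…,z_r) be Σₖ-contexts (each containing at least one variable), and s₁,…,s_ℓ, t₁,…,t_r closed Σ-terms whose roots are not in Σₖ, partitioned into p ≅-classes. If [C[s₁,…,s_ℓ]]ₖ_≅ ≈ₖ [D[t₁,…,t_r]]ₖ_≅, then, writing w₁,…,w_p for fresh variables and substituting for each alien subterm the variable indexed by its ≅-class, the theory 𝕋ₖ proves C(w_{p₁},…,w_{p_ℓ}) = D(w_{p_{ℓ+1}},…,w_{p_{ℓ+r}}). -/

import Mathlib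

/-- First-order terms over symbols `S` with arity `ar` and variables `V`. -/
inductive Tm (S : Type) (ar : S → ℕ) (V : Type) : Type
  | var : V → Tm S ar V
  | app : (f : S) → (Fin (ar f) → Tm S ar V) → Tm S ar V

namespace Tm
variable {S : Type} {ar : S → ℕ} {V W : Type}

def mapVar (g : V → W) : Tm S ar V → Tm S ar W
  | var v => var (g v)
  | app f ts => app f (fun i => (ts i).mapVar g)

def bind : Tm S ar V → (V → Tm S ar W) → Tm S ar W
  | var v, g => g v
  | app f ts, g => app f (fun i => (ts i).bind g)

/-- All variables of a term belong to a given set. -/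
def VarsIn : Tm S ar V → Set V → Prop
  | var v, A => v ∈ A
  | app _ ts, A => ∀ i, VarsIn (ts i) A

/-- The term contains at least one variable. -/
def HasVar : Tm S ar V → Prop
  | var _ => True
  | app _ ts => ∃ i, HasVar (ts i)

end Tm

/-- The combined signature: operation symbols of the two theories (`op`),
generator constants `y₁,…,yₙ` (`gen`), and indeterminate constants `x = ind 0`,
`xᵢ = ind i` (`ind`). -/
inductive CSym (F : Bool → Type) (n : ℕ) : Type
  | op : (b : Bool) → F b → CSym F n
  | gen : Fin n → CSym F n
  | ind : ℕ → CSym F n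

namespace CSym
variable {F : Bool → Type} {n : ℕ}

def arity (arF : ∀ b, F b → ℕ) : CSym F n → ℕ
  | op b f => arF b f
  | gen _ => 0
  | ind _ => 0

/-- Which of the four component signatures a symbol belongs to:
`0 = Σ₁`, `1 = Σ₂`, `2 = Σ₃`, `3 = Σ₄`. -/
def sig : CSym F n → Fin 4
  | op false _ => 0
  | op true _ => 1
  | gen _ => 2
  | ind _ => 3

end CSym
section Setup

variable (F : Bool → Type) (arF : ∀ b, F b → ℕ) (n : ℕ)

/-- Closed terms over the combined signature `Σ = Σ₁ ∪ Σ₂ ∪ Σ₃ ∪ Σ₄`. -/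
abbrev CT := Tm (CSym F n) (CSym.arity arF) Empty

/-- The root symbol of a closed term. -/
def rootSym : CT F arF n → CSym F n
  | .var v => v.elim
  | .app f _ => f

/-- All symbols of the closed term satisfy the predicate `P`. -/
def InSig (P : CSym F n → Prop) : CT F arF n → Prop
  | .var v => v.elim
  | .app f ts => P f ∧ ∀ i, InSig P (ts i)

/-- A closed term is pure if all of its symbols belong to a single one of the
four component signatures. -/
def IsPure (t : CT F arF n) : Prop := ∃ k : Fin 4, InSig F arF n (fun s => s.sig = k) t

/-- The rank of a closed term: `0` if pure, and otherwise `1` plus the maximal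
rank of its alien subterms. -/
def rank : CT F arF n → ℕ
  | .var v => v.elim
  | .app f ts =>
      Finset.univ.sup fun i =>
        rank (ts i) + (if (rootSym F arF n (ts i)).sig = f.sig then 0 else 1)

/-- The maximal subterms of `t` whose root is outside signature `k`. -/
def aliensUnder (k : Fin 4) : CT F arF n → Set (CT F arF n)
  | .var v => v.elim
  | .app f ts =>
      if f.sig = k then ⋃ i, aliensUnder k (ts i) else {Tm.app f ts}

/-- The alien subterms of a closed term (relative to the signature of its root). -/
def aliensSet : CT F arF n → Set (CT F arF n)
  | .var v => v.elim
  | .app f ts => ⋃ i, aliensUnder F arF n f.sig (ts i)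

/-- All alien subterms at arbitrary depth. -/
def allAliensSet : CT F arF n → Set (CT F arF n)
  | .var v => v.elim
  | .app f ts =>
      ⋃ i, (if (rootSym F arF n (ts i)).sig = f.sig then (∅ : Set _) else {ts i}) ∪
        allAliensSet (ts i)

/-- View a closed combined term through the layer of theory `b`: keep the
top part built from `Σ_b`-symbols and regard the maximal non-`Σ_b`-rooted
subterms as opaque constants. -/
def layerize (b : Bool) : CT F arF n → Tm (F b) (arF b) (CT F arF n)
  | .app (.op b' f) ts =>
      if h : b' = b then h ▸ (Tm.app f (fun i => layerize b' (ts i)))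
      else Tm.var (Tm.app (.op b' f) ts)
  | t => Tm.var t

end Setup
section Setup2

variable (F : Bool → Type) (arF : ∀ b, F b → ℕ) (n : ℕ)
variable (Ax : ∀ b, Set (Tm (F b) (arF b) ℕ × Tm (F b) (arF b) ℕ))

mutual
/-- The isomorphism relation `≅` on closed combined terms, defined together
with the layer congruences: two terms are isomorphic iff their roots lie in the
same component signature and their alien abstractions are congruent modulo the
corresponding theory (for the constant signatures `Σ₃, Σ₄` this is syntactic
equality). -/
inductive Iso : CT F arF n → CT F arF n → Prop where
  | opEq (b : Bool) (u v : CT F arF n) :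
      (∃ g : F b, rootSym F arF n u = .op b g) →
      (∃ g : F b, rootSym F arF n v = .op b g) →
      LEq b (layerize F arF n b u) (layerize F arF n b v) → Iso u v
  | constEq (t : CT F arF n) :
      ((rootSym F arF n t).sig = 2 ∨ (rootSym F arF n t).sig = 3) → Iso t t

/-- The congruence `≈_b` on `Σ_b`-terms whose constants are closed combined
terms (representing their `≅`-classes): generated by the substitution instances
of the axioms of `𝕋_b` together with the identification of `≅`-related
constants. -/
inductive LEq : (b : Bool) →
    Tm (F b) (arF b) (CT F arF n) → Tm (F b) (arF b) (CT F arF n) → Prop where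
  | refl (b) (t) : LEq b t t
  | symm {b s t} : LEq b s t → LEq b t s
  | trans {b s t u} : LEq b s t → LEq b t u → LEq b s u
  | congr (b) (g : F b) (ts us : Fin (arF b g) → Tm (F b) (arF b) (CT F arF n)) :
      (∀ i, LEq b (ts i) (us i)) → LEq b (.app g ts) (.app g us)
  | varRel (b) (s t : CT F arF n) : Iso s t → LEq b (.var s) (.var t)
  | ax (b) (u v : Tm (F b) (arF b) ℕ) : (u, v) ∈ Ax b →
      ∀ σ : ℕ → Tm (F b) (arF b) (CT F arF n), LEq b (u.bind σ) (v.bind σ)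
end

end Setup2
section Setup3

variable (F : Bool → Type) (arF : ∀ b, F b → ℕ) (n : ℕ)
variable (Ax : ∀ b, Set (Tm (F b) (arF b) ℕ × Tm (F b) (arF b) ℕ))

/-- The combined algebra `𝒜 = Term^c(Σ)/≅`. -/
abbrev Alg := Quot (Iso F arF n Ax)

/-- Provable equality in the theory `𝕋_b` on terms with variables (equivalently
the smallest `Σ_b`-congruence containing all substitution instances of the
axioms of `𝕋_b`); with `V := Alg` this is the congruence `≈_b` on
`Term^c(Σ_b, Term^c(Σ)/≅)`. -/
inductive AxCong (b : Bool) {V : Type} : Tm (F b) (arF b) V → Tm (F b) (arF b) V → Prop where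
  | refl (t) : AxCong b t t
  | symm {s t} : AxCong b s t → AxCong b t s
  | trans {s t u} : AxCong b s t → AxCong b t u → AxCong b s u
  | congr (g : F b) (ts us : Fin (arF b g) → Tm (F b) (arF b) V) :
      (∀ i, AxCong b (ts i) (us i)) → AxCong b (.app g ts) (.app g us)
  | ax (u v : Tm (F b) (arF b) ℕ) : (u, v) ∈ Ax b →
      ∀ σ : ℕ → Tm (F b) (arF b) V, AxCong b (u.bind σ) (v.bind σ)

/-- Abstraction of alien subterms: `[t]ᵇ_≅ ∈ Term^c(Σ_b, Term^c(Σ)/≅)`. -/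
def absQ (b : Bool) (t : CT F arF n) : Tm (F b) (arF b) (Alg F arF n Ax) :=
  (layerize F arF n b t).mapVar (Quot.mk _)

attribute [local instance] Classical.propDecidable

/-- The interpretation `t^𝒜` of a closed combined term in the combined algebra:
a term collapses to (the class of) an alien subterm whose class its alien
abstraction is `≈_b`-congruent to, and is interpreted by its own class
otherwise. -/
noncomputable def interp : CT F arF n → Alg F arF n Ax
  | .app (.op b g) ts =>
      let t' : CT F arF n := .app (.op b g) (fun i => (interp (ts i)).out)
      if h : ∃ u, u ∈ aliensSet F arF n t' ∧
          AxCong F arF Ax b (absQ F arF n Ax b t') (.var (Quot.mk _ u))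
      then Quot.mk _ h.choose
      else Quot.mk _ t'
  | t => Quot.mk _ t

end Setup3
section Setup4

variable (F : Bool → Type) (arF : ∀ b, F b → ℕ) (n : ℕ)
variable (Ax : ∀ b, Set (Tm (F b) (arF b) ℕ × Tm (F b) (arF b) ℕ))

/-- Substitution of a closed term `w` for the indeterminate constant `x_j` in a
closed combined term. -/
def substInd (j : ℕ) (w : CT F arF n) : CT F arF n → CT F arF n
  | .var v => v.elim
  | .app (.ind j') ts => if j' = j then w else .app (.ind j') ts
  | .app f ts => .app f (fun i => substInd j w (ts i))

/-- The indeterminate constant `x_i` as a closed term (`x = xTm 0`). -/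
def xTm (i : ℕ) : CT F arF n := .app (.ind i) Fin.elim0

/-- Replace every indeterminate constant occurring in a term by `x`. -/
def indToX : CT F arF n → CT F arF n
  | .var v => v.elim
  | .app (.ind _) _ => xTm F arF n 0
  | .app f ts => .app f (fun i => indToX (ts i))

/-- Embedding of `Σ_b`-terms into combined terms. -/
def embedOp (b : Bool) {V : Type} : Tm (F b) (arF b) V → Tm (CSym F n) (CSym.arity arF) V
  | .var v => .var v
  | .app g ts => .app (.op b g) (fun i => embedOp b (ts i))

/-- Provable equality for the (combination of the) theories `𝕋_b` (`b ∈ B`) on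
closed terms over the sub-signature of symbols satisfying `P`: the smallest
congruence on that set of closed terms containing all substitution instances
(by closed terms over the sub-signature) of the axioms. -/
inductive PE (B : Set Bool) (P : CSym F n → Prop) : CT F arF n → CT F arF n → Prop where
  | refl (t) : InSig F arF n P t → PE B P t t
  | symm {s t} : PE B P s t → PE B P t s
  | trans {s t u} : PE B P s t → PE B P t u → PE B P s u
  | congr (f : CSym F n) (ts us : Fin (CSym.arity arF f) → CT F arF n) : P f →
      (∀ i, PE B P (ts i) (us i)) → PE B P (.app f ts) (.app f us)
  | ax (b : Bool) (hb : b ∈ B) (u v : Tm (F b) (arF b) ℕ) (h : (u, v) ∈ Ax b)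
      (σ : ℕ → CT F arF n) : (∀ m, InSig F arF n P (σ m)) →
      PE B P ((embedOp F arF n b u).bind σ) ((embedOp F arF n b v).bind σ)

/-- The sub-signature consisting of the operations of the theories in `B`, all
generator constants `y₁,…,yₙ`, and the indeterminates `x_j` with `j ∈ J`. -/
def SigP (B : Set Bool) (J : Set ℕ) : CSym F n → Prop
  | .op b _ => b ∈ B
  | .gen _ => True
  | .ind j => j ∈ J

/-- The (combination of the) theories in `B` is non-trivial: it does not prove
the equation `x = y` for distinct variables (equivalently, it does not identify
two distinct indeterminate constants). -/
def Nontriv (B : Set Bool) : Prop :=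
  ¬ PE F arF n Ax B (SigP F n B Set.univ) (xTm F arF n 1) (xTm F arF n 2)

/-- Membership of (the class of) `t` in the logical isotropy group of the free
model on `n` generators of the combination of the theories in `B`: `t` is a
closed term over the signature extended by the constant `x` that is invertible
under substitution into `x` and commutes generically with every operation. -/
def GIso (B : Set Bool) (t : CT F arF n) : Prop :=
  InSig F arF n (SigP F n B {0}) t ∧
  (∃ tinv, InSig F arF n (SigP F n B {0}) tinv ∧
    PE F arF n Ax B (SigP F n B {0}) (substInd F arF n 0 tinv t) (xTm F arF n 0) ∧
    PE F arF n Ax B (SigP F n B {0}) (substInd F arF n 0 t tinv) (xTm F arF n 0)) ∧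
  ∀ b, b ∈ B → ∀ g : F b,
    PE F arF n Ax B (SigP F n B {j | 1 ≤ j ∧ j ≤ arF b g})
      (substInd F arF n 0 (.app (.op b g) (fun i => xTm F arF n (i.val + 1))) t)
      (.app (.op b g) (fun i => substInd F arF n 0 (xTm F arF n (i.val + 1)) t))

/-- `g` is a projection in `𝕋_b`. -/
def IsProj (b : Bool) (g : F b) : Prop :=
  ∃ i : Fin (arF b g),
    AxCong F arF Ax b (V := ℕ) (.app g (fun j => .var j.val)) (.var i.val)

/-- `g` is constant in `𝕋_b`: `𝕋_b` proves `g(y₁,…,y_m) = s` for pairwise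
distinct variables none of which occurs in `s`. -/
def IsConst (b : Bool) (g : F b) : Prop :=
  ∃ s : Tm (F b) (arF b) ℕ, s.VarsIn {m | arF b g ≤ m} ∧
    AxCong F arF Ax b (V := ℕ) (.app g (fun j => .var j.val)) s

end Setup4
section Models

variable (F : Bool → Type) (arF : ∀ b, F b → ℕ) (n : ℕ)
variable (Ax : ∀ b, Set (Tm (F b) (arF b) ℕ × Tm (F b) (arF b) ℕ))

/-- Evaluation of a `Σ_b`-term in a set equipped with operations. -/
def evalTm {α : Type} (ops : ∀ b (g : F b), (Fin (arF b g) → α) → α)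
    (b : Bool) {V : Type} (ρ : V → α) : Tm (F b) (arF b) V → α
  | .var v => ρ v
  | .app g ts => ops b g (fun i => evalTm ops b ρ (ts i))

/-- A (set-based) model of the combined theory `𝕋₁ + 𝕋₂`. -/
structure TModel where
  carrier : Type
  ops : ∀ b (g : F b), (Fin (arF b g) → carrier) → carrier
  sat : ∀ b u v, (u, v) ∈ Ax b → ∀ ρ : ℕ → carrier,
      evalTm F arF ops b ρ u = evalTm F arF ops b ρ v

/-- Homomorphisms of models. -/
@[ext]
structure TModelHom (M N : TModel F arF Ax) where
  toFun : M.carrier → N.carrier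
  map_ops : ∀ b (g : F b) (args : Fin (arF b g) → M.carrier),
      toFun (M.ops b g args) = N.ops b g (fun i => toFun (args i))

/-- The identity homomorphism. -/
def TModelHom.id (M : TModel F arF Ax) : TModelHom F arF Ax M M :=
  ⟨fun a => a, fun _ _ _ => rfl⟩

/-- Composition of homomorphisms. -/
def TModelHom.comp {M M' M'' : TModel F arF Ax} (h' : TModelHom F arF Ax M' M'')
    (h : TModelHom F arF Ax M M') : TModelHom F arF Ax M M'' :=
  ⟨fun a => h'.toFun (h.toFun a), fun b g args => by
    simp [h.map_ops, h'.map_ops]⟩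

/-- `M` together with the `n` elements `gens` is a free model on `n`
generators: the universal property. -/
def IsFreeOn (M : TModel F arF Ax) (gens : Fin n → M.carrier) : Prop :=
  ∀ (N : TModel F arF Ax) (a : Fin n → N.carrier),
    ∃! h : TModelHom F arF Ax M N, ∀ i, h.toFun (gens i) = a i

end Models

namespace Tm
variable {S : Type} {ar : S → ℕ} {U V W : Type}

theorem mapVar_mapVar (f : U → V) (g : V → W) (t : Tm S ar U) :
    (t.mapVar f).mapVar g = t.mapVar (g ∘ f) := by
  induction t with
  | var v => rfl
  | app h ts ih => simp only [mapVar, ih]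

theorem mapVar_bind (σ : U → Tm S ar V) (g : V → W) (t : Tm S ar U) :
    (t.bind σ).mapVar g = t.bind (fun m => (σ m).mapVar g) := by
  induction t with
  | var v => rfl
  | app h ts ih => simp only [bind, mapVar, ih]

end Tm

theorem AxCong.mapVar {F : Bool → Type} {arF : ∀ b, F b → ℕ}
    {Ax : ∀ b, Set (Tm (F b) (arF b) ℕ × Tm (F b) (arF b) ℕ)} {b : Bool} {V W : Type}
    (φ : V → W) {s t : Tm (F b) (arF b) V} (h : AxCong F arF Ax b s t) :
    AxCong F arF Ax b (s.mapVar φ) (t.mapVar φ) := by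
  induction h with
  | refl t => exact .refl _
  | symm _ ih => exact ih.symm
  | trans _ _ ih₁ ih₂ => exact ih₁.trans ih₂
  | congr g ts us _ ih => exact .congr g _ _ ih
  | ax u v huv σ =>
    rw [Tm.mapVar_bind, Tm.mapVar_bind]
    exact .ax u v huv _

namespace Iso
variable {F : Bool → Type} {arF : ∀ b, F b → ℕ} {n : ℕ}
  {Ax : ∀ b, Set (Tm (F b) (arF b) ℕ × Tm (F b) (arF b) ℕ)}

theorem refl : ∀ t : CT F arF n, Iso F arF n Ax t t
  | .app (.op b g) _ => .opEq b _ _ ⟨g, rfl⟩ ⟨g, rfl⟩ (.refl b _)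
  | .app (.gen _) _ => .constEq _ (.inl rfl)
  | .app (.ind _) _ => .constEq _ (.inr rfl)

theorem symm {u v : CT F arF n} : Iso F arF n Ax u v → Iso F arF n Ax v u
  | .opEq b u v hu hv huv => .opEq b v u hv hu huv.symm
  | .constEq t ht => .constEq t ht

theorem trans {u v w : CT F arF n} :
    Iso F arF n Ax u v → Iso F arF n Ax v w → Iso F arF n Ax u w
  | .constEq _ _, hvw => hvw
  | huv@(.opEq ..), .constEq _ _ => huv
  | .opEq b _ _ hu ⟨g, hg⟩ huv, .opEq b' _ _ ⟨g', hg'⟩ hw hvw => by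
    obtain rfl : b = b' := by rw [hg] at hg'; injection hg'
    exact .opEq b _ _ hu hw (huv.trans hvw)

theorem equivalence : Equivalence (Iso F arF n Ax) := ⟨refl, symm, trans⟩

theorem quot_mk_eq_iff {u v : CT F arF n} :
    Quot.mk (Iso F arF n Ax) u = Quot.mk _ v ↔ Iso F arF n Ax u v :=
  Quot.eq.trans equivalence.eqvGen_iff

end Iso

section Statement
variable (F : Bool → Type) (arF : ∀ b, F b → ℕ) (n : ℕ)
variable (Ax : ∀ b, Set (Tm (F b) (arF b) ℕ × Tm (F b) (arF b) ℕ))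

/-- Variable abstraction of alien-congruent terms: if the alien abstractions of
`C[s₁,…,s_ℓ]` and `D[t₁,…,t_r]` are `≈ₖ`-congruent, then substituting for each
alien subterm a fresh variable indexed by its `≅`-class yields terms provably
equal in `𝕋ₖ`. -/
theorem variable_abstraction (b : Bool) (l r p : ℕ) (hp : 1 ≤ p)
    (C : Tm (F b) (arF b) (Fin l)) (D : Tm (F b) (arF b) (Fin r))
    (hC : C.HasVar) (hD : D.HasVar)
    (s : Fin l → CT F arF n) (t : Fin r → CT F arF n)
    (hs : ∀ j, ∀ g : F b, rootSym F arF n (s j) ≠ .op b g)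
    (ht : ∀ q, ∀ g : F b, rootSym F arF n (t q) ≠ .op b g)
    (cls : Fin (l + r) → Fin p)
    (hcls : ∀ i j : Fin (l + r),
      cls i = cls j ↔ Iso F arF n Ax (Fin.append s t i) (Fin.append s t j))
    (h : AxCong F arF Ax b
      (C.mapVar (fun j => Quot.mk (Iso F arF n Ax) (s j)))
      (D.mapVar (fun q => Quot.mk (Iso F arF n Ax) (t q)))) :
    AxCong F arF Ax b (V := ℕ)
      (C.mapVar (fun j => ((cls (Fin.castAdd r j) : Fin p) : ℕ)))
      (D.mapVar (fun q => ((cls (Fin.natAdd l q) : Fin p) : ℕ))) := by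
  set alien : Fin (l + r) → Alg F arF n Ax := fun i => Quot.mk _ (Fin.append s t i)
  -- The class index is a function of the `≅`-class, so it extends to all of `𝒜`.
  have hfactor : Function.FactorsThrough (fun i => ((cls i : Fin p) : ℕ)) alien :=
    fun i j hij => congrArg _ ((hcls i j).mpr (Iso.quot_mk_eq_iff.mp hij))
  set φ := Function.extend alien (fun i => ((cls i : Fin p) : ℕ)) (fun _ => 0)
  have hφ (i : Fin (l + r)) : φ (alien i) = cls i := hfactor.extend_apply _ i
  have hφs (j : Fin l) : φ (Quot.mk _ (s j)) = cls (Fin.castAdd r j) := by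
    simpa only [alien, Fin.append_left] using hφ (Fin.castAdd r j)
  have hφt (q : Fin r) : φ (Quot.mk _ (t q)) = cls (Fin.natAdd l q) := by
    simpa only [alien, Fin.append_right] using hφ (Fin.natAdd l q)
  have := h.mapVar φ
  rwa [Tm.mapVar_mapVar, Tm.mapVar_mapVar, Function.comp_def, Function.comp_def,
    funext hφs, funext hφt] at this
end Statement
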